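/- Let Q be a unital quantale and (A,𝔸), (B,𝔹) Q-preordered sets. Let F be a map sending contravariant presheaves on 𝔹 to contravariant presheaves on 𝔸 which is a left adjoint Q-functor, i.e., there is a map G sending contravariant presheaves on 𝔸 to contravariant presheaves on 𝔹 such that PA(F(λ), μ) = PB(λ, G(μ)) for all contravariant presheaves λ on 𝔹 and μ on 𝔸, explicitly ⨅_{x∈A} μ(x)/F(λ)(x) = ⨅_{y∈B} G(μ)(y)/λ(y). Then F is the Kan map of the Q-distributor φ(x,y) := F(𝔹(−,y))(x): for every contravariant presheaf λ on 𝔹 and every x ∈ A, F(λ)(x) = ⨆_{y∈B} λ(y)&F(𝔹(−,y))(x), where 𝔹(−,y) denotes the representable presheaf y' ↦ 𝔹(y',y). -/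
import Mathlib


universe u

/-- A unital quantale: a complete lattice with a monoid structure whose multiplication
preserves arbitrary suprema in each variable. -/
class UnitalQuantale (Q : Type u) extends CompleteLattice Q, Monoid Q where
  mul_sSup : ∀ (a : Q) (S : Set Q), a * sSup S = ⨆ b ∈ S, a * b
  sSup_mul : ∀ (S : Set Q) (a : Q), sSup S * a = ⨆ b ∈ S, b * a

variable {Q : Type u} [UnitalQuantale Q]

/-- The left residual `b / a = ⨆ {c | c * a ≤ b}`. -/
def qdivr (b a : Q) : Q := sSup {c : Q | c * a ≤ b}

/-- The right residual `a ∖ b = ⨆ {c | a * c ≤ b}`. -/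
def qdivl (a b : Q) : Q := sSup {c : Q | a * c ≤ b}

lemma qiSup_mul {ι : Sort*} (f : ι → Q) (a : Q) : (⨆ i, f i) * a = ⨆ i, f i * a := by
  rw [iSup, UnitalQuantale.sSup_mul, iSup_range]

lemma qmul_le_mul_left (a : Q) {b c : Q} (h : b ≤ c) : b * a ≤ c * a := by
  have hc : sSup {b, c} = c := by rw [sSup_pair]; exact sup_eq_right.mpr h
  calc b * a ≤ sSup {b, c} * a := by
        rw [UnitalQuantale.sSup_mul]
        exact le_iSup₂_of_le b (by simp) le_rfl
    _ = c * a := by rw [hc]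

lemma qmul_le_mul_right (a : Q) {b c : Q} (h : b ≤ c) : a * b ≤ a * c := by
  have hc : sSup {b, c} = c := by rw [sSup_pair]; exact sup_eq_right.mpr h
  calc a * b ≤ a * sSup {b, c} := by
        rw [UnitalQuantale.mul_sSup]
        exact le_iSup₂_of_le b (by simp) le_rfl
    _ = a * c := by rw [hc]

lemma qdivr_mul_le (b a : Q) : qdivr b a * a ≤ b := by
  rw [qdivr, UnitalQuantale.sSup_mul]
  exact iSup₂_le fun c hc => hc

lemma le_qdivr_iff {a b c : Q} : c ≤ qdivr b a ↔ c * a ≤ b :=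
  ⟨fun h => le_trans (qmul_le_mul_left a h) (qdivr_mul_le b a), fun h => le_sSup h⟩

/-- Every left adjoint map from contravariant presheaves on `𝔹` to contravariant
presheaves on `𝔸` is the Kan map of the distributor `φ(x,y) = F(𝔹(−,y))(x)`
(part of Theorem `Kan_distributor_bijection`). -/
theorem left_adjoint_is_kan {A B : Type*}
    (𝔸 : A → A → Q) (𝔹 : B → B → Q)
    (hArefl : ∀ x, (1 : Q) ≤ 𝔸 x x)
    (hAtrans : ∀ x y z, 𝔸 y z * 𝔸 x y ≤ 𝔸 x z)
    (hBrefl : ∀ y, (1 : Q) ≤ 𝔹 y y)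
    (hBtrans : ∀ x y z, 𝔹 y z * 𝔹 x y ≤ 𝔹 x z)
    (F : (B → Q) → (A → Q)) (G : (A → Q) → (B → Q))
    (hFmaps : ∀ lam : B → Q, (∀ y y', lam y' * 𝔹 y y' ≤ lam y) →
        ∀ x x', F lam x' * 𝔸 x x' ≤ F lam x)
    (hGmaps : ∀ μ : A → Q, (∀ x x', μ x' * 𝔸 x x' ≤ μ x) →
        ∀ y y', G μ y' * 𝔹 y y' ≤ G μ y)
    (hadj : ∀ (lam : B → Q) (μ : A → Q),
        (∀ y y', lam y' * 𝔹 y y' ≤ lam y) → (∀ x x', μ x' * 𝔸 x x' ≤ μ x) →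
        (⨅ x, qdivr (μ x) (F lam x)) = ⨅ y, qdivr (G μ y) (lam y)) :
    ∀ lam : B → Q, (∀ y y', lam y' * 𝔹 y y' ≤ lam y) →
      ∀ x : A, F lam x = ⨆ y, lam y * F (fun y' => 𝔹 y' y) x := by
  intro lam hlam x
  have hrep : ∀ y : B, ∀ y1 y2 : B,
      (fun y' => 𝔹 y' y) y2 * 𝔹 y1 y2 ≤ (fun y' => 𝔹 y' y) y1 :=
    fun y y1 y2 => hBtrans y1 y2 y
  set μ : A → Q := fun x => ⨆ y, lam y * F (fun y' => 𝔹 y' y) x with hμ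
  have hμpre : ∀ x x', μ x' * 𝔸 x x' ≤ μ x := by
    intro x x'
    rw [hμ]
    simp only
    rw [qiSup_mul]
    apply iSup_le; intro y
    rw [mul_assoc]
    exact le_trans (qmul_le_mul_right _ (hFmaps _ (hrep y) x x')) (le_iSup (fun y => lam y * F (fun y' => 𝔹 y' y) x) y)
  have hFlam_pre := hFmaps lam hlam
  -- (≥) direction
  have h1 : ∀ y', lam y' ≤ G (F lam) y' := by
    intro y'
    have hself := hadj lam (F lam) hlam hFlam_pre
    have h0 : (1 : Q) ≤ ⨅ y, qdivr (G (F lam) y) (lam y) := by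
      rw [← hself]
      exact le_iInf fun x' => le_qdivr_iff.mpr (by rw [one_mul])
    have := le_qdivr_iff.mp (le_trans h0 (iInf_le _ y'))
    rwa [one_mul] at this
  have hge : (⨆ y, lam y * F (fun y' => 𝔹 y' y) x) ≤ F lam x := by
    apply iSup_le; intro y
    have hadj2 := hadj (fun y' => 𝔹 y' y) (F lam) (hrep y) hFlam_pre
    have h2 : lam y ≤ ⨅ y1, qdivr (G (F lam) y1) (𝔹 y1 y) :=
      le_iInf fun y1 => le_qdivr_iff.mpr (le_trans (hlam y1 y) (h1 y1))
    rw [← hadj2] at h2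
    exact le_qdivr_iff.mp (le_trans h2 (iInf_le _ x))
  -- (≤) direction
  have h3 : ∀ y, lam y ≤ G μ y := by
    intro y
    have hadj3 := hadj (fun y' => 𝔹 y' y) μ (hrep y) hμpre
    have h4 : lam y ≤ ⨅ x', qdivr (μ x') (F (fun y' => 𝔹 y' y) x') :=
      le_iInf fun x' => le_qdivr_iff.mpr (le_iSup (fun y => lam y * F (fun y' => 𝔹 y' y) x') y)
    rw [hadj3] at h4
    have h5 := le_qdivr_iff.mp (le_trans h4 (iInf_le _ y))
    calc lam y = lam y * 1 := (mul_one _).symm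
      _ ≤ lam y * 𝔹 y y := qmul_le_mul_right _ (hBrefl y)
      _ ≤ G μ y := h5
  have hle : F lam x ≤ μ x := by
    have hadj4 := hadj lam μ hlam hμpre
    have h0 : (1 : Q) ≤ ⨅ y, qdivr (G μ y) (lam y) :=
      le_iInf fun y => le_qdivr_iff.mpr (by rw [one_mul]; exact h3 y)
    rw [← hadj4] at h0
    have := le_qdivr_iff.mp (le_trans h0 (iInf_le _ x))
    rwa [one_mul] at this
  exact le_antisymm hle hge
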